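/- arXiv:2006.15249 — 4 statements merged into one kernel-verified Lean document; each statement's English description precedes it below -/
import Mathlib

section
/- Let p and r be primes and let f, m ≥ 1 be integers such that p^f + 1 = r^m. Then one of the following holds: (a) p = 2, f = 3, r = 3, m = 2; (b) p = 2, m = 1, and f is a power of 2 (so r = 2^f + 1 is a Fermat prime); (c) r = 2, f = 1, and m is prime (so p = 2^m − 1 is a Mersenne prime). -/
/-!
By parity exactly one of `p`, `r` equals `2`. For `2 ^ f + 1 = r ^ m` with `m` odd, and for
`p ^ f + 1 = 2 ^ m` with `f` odd, lifting the exponent at `2` shows that `2 ^ f` already divides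
`r - 1` (resp. `2 ^ m` divides `p + 1`), which forces the odd exponent to be `1`; the Fermat and
Mersenne criteria then make the other exponent a power of two, resp. a prime. For even `m`,
`(t - 1)(t + 1) = 2 ^ f` with `t = r ^ (m / 2)` has two powers of two differing by `2`, so `t = 3`;
an even `f` is impossible because an odd square plus one is `2 mod 4`.
-/

theorem pow_dvd_sub_of_pow_sub_pow_eq_pow {R : Type*} [CommRing R] [IsDomain R] {p x y : R}
    (hp : Prime p) (hxy : p ∣ x - y) (hx : ¬p ∣ x) {n k : ℕ} (hn : ¬p ∣ (n : R))
    (h : x ^ n - y ^ n = p ^ k) : p ^ k ∣ x - y := by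
  have hmul := emultiplicity_pow_sub_pow_of_prime hp hxy hx hn
  rw [h, emultiplicity_pow_self_of_prime hp] at hmul
  exact pow_dvd_of_le_emultiplicity hmul.le

theorem Int.pow_sub_pow_le_sub_of_eq_two_pow {x y : ℤ} (hx : Odd x) (hy : Odd y) (hyx : y < x)
    {n k : ℕ} (hn : Odd n) (h : x ^ n - y ^ n = 2 ^ k) : x ^ n - y ^ n ≤ x - y := by
  have hdvd : (2 : ℤ) ^ k ∣ x - y := by
    refine pow_dvd_sub_of_pow_sub_pow_eq_pow Int.prime_two (hx.sub_odd hy).two_dvd ?_ ?_ h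
    · rwa [← even_iff_two_dvd, Int.not_even_iff_odd]
    · exact_mod_cast hn.not_two_dvd_nat
  exact h ▸ Int.le_of_dvd (sub_pos.2 hyx) hdvd

theorem Nat.eq_one_of_pow_eq_two_pow_add_one {r m f : ℕ} (hr : 1 < r) (hr_odd : Odd r)
    (hm : Odd m) (h : r ^ m = 2 ^ f + 1) : m = 1 := by
  have hZ : (r : ℤ) ^ m - 1 ^ m = 2 ^ f := by
    rw [(by exact_mod_cast h : (r : ℤ) ^ m = 2 ^ f + 1)]; ring
  have hle := Int.pow_sub_pow_le_sub_of_eq_two_pow (mod_cast hr_odd) odd_one (mod_cast hr) hm hZ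
  rw [one_pow] at hle
  have : r ^ m ≤ r ^ 1 := by exact_mod_cast (by linarith : (r : ℤ) ^ m ≤ r ^ 1)
  exact le_antisymm ((Nat.pow_le_pow_iff_right hr).1 this) hm.pos

theorem Nat.eq_one_of_pow_add_one_eq_two_pow {p f m : ℕ} (hp : 1 < p) (hp_odd : Odd p)
    (hf : Odd f) (h : p ^ f + 1 = 2 ^ m) : f = 1 := by
  have hZ : (p : ℤ) ^ f - (-1) ^ f = 2 ^ m := by
    rw [hf.neg_one_pow, ← (by exact_mod_cast h : (p : ℤ) ^ f + 1 = 2 ^ m)]; ring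
  have hle := Int.pow_sub_pow_le_sub_of_eq_two_pow (mod_cast hp_odd) (by decide) (by omega) hf hZ
  rw [hf.neg_one_pow] at hle
  have : p ^ f ≤ p ^ 1 := by exact_mod_cast (by linarith : (p : ℤ) ^ f ≤ p ^ 1)
  exact le_antisymm ((Nat.pow_le_pow_iff_right hp).1 this) hf.pos

theorem Nat.eq_one_of_two_pow_add_two_eq_two_pow {a b : ℕ} (h : 2 ^ a + 2 = 2 ^ b) : a = 1 := by
  have := Nat.two_pow_pos a
  rcases a with _ | _ | a <;> rcases b with _ | _ | b <;> simp only [pow_succ, pow_zero] at h <;>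
    omega

theorem Nat.eq_three_of_sq_eq_two_pow_add_one {t f : ℕ} (h : t ^ 2 = 2 ^ f + 1) : t = 3 := by
  have ht : t ≠ 0 := by
    rintro rfl
    simp at h
  obtain ⟨u, rfl⟩ := Nat.exists_eq_add_one.2 (Nat.pos_of_ne_zero ht)
  have hfac : u * (u + 2) = 2 ^ f := by
    have : u * (u + 2) + 1 = 2 ^ f + 1 := by rw [← h]; ring
    omega
  obtain ⟨a, -, ha⟩ := (Nat.dvd_prime_pow Nat.prime_two).1 (Dvd.intro _ hfac)
  obtain ⟨b, -, hb⟩ := (Nat.dvd_prime_pow Nat.prime_two).1 (Dvd.intro_left _ hfac)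
  have ha1 := Nat.eq_one_of_two_pow_add_two_eq_two_pow (ha ▸ hb)
  subst ha1
  omega

theorem Nat.sq_add_one_ne_two_pow {k m : ℕ} (hk : Odd k) (hm : 2 ≤ m) :
    k ^ 2 + 1 ≠ 2 ^ m := by
  have h8 := Nat.eight_dvd_sq_sub_one_of_odd hk
  have h4 : 2 ^ 2 ∣ 2 ^ m := pow_dvd_pow 2 hm
  have hk2 : 0 < k ^ 2 := pow_pos hk.pos 2
  omega

theorem Nat.Prime.two_pow_add_one_eq_pow_cases {f r m : ℕ} (hr : r.Prime) (hr_odd : Odd r)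
    (hf : f ≠ 0) (h : 2 ^ f + 1 = r ^ m) :
    (f = 3 ∧ r = 3 ∧ m = 2) ∨ (m = 1 ∧ ∃ k, f = 2 ^ k) := by
  rcases Nat.even_or_odd m with ⟨s, rfl⟩ | hm
  · left
    have h3 : r ^ s = 3 := Nat.eq_three_of_sq_eq_two_pow_add_one (by rw [h]; ring)
    obtain ⟨rfl, rfl⟩ := Nat.prime_three.pow_eq_iff.1 h3
    have h8 : 2 ^ f = 2 ^ 3 := by norm_num at h; omega
    exact ⟨Nat.pow_right_injective le_rfl h8, rfl, rfl⟩
  · obtain rfl := Nat.eq_one_of_pow_eq_two_pow_add_one hr.one_lt hr_odd hm h.symm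
    exact Or.inr ⟨rfl, Nat.pow_of_pow_add_prime one_lt_two hf (by rwa [h, pow_one])⟩

theorem Nat.Prime.eq_one_and_prime_of_pow_add_one_eq_two_pow {p f m : ℕ} (hp : p.Prime)
    (hp_odd : Odd p) (hf : f ≠ 0) (h : p ^ f + 1 = 2 ^ m) : f = 1 ∧ m.Prime := by
  rcases Nat.even_or_odd f with ⟨t, rfl⟩ | hf_odd
  · have hpf : 1 < p ^ (t + t) := Nat.one_lt_pow hf hp.one_lt
    have hm : 2 ≤ m := by
      by_contra
      interval_cases m <;> omega
    exact absurd (by rw [← h]; ring) (Nat.sq_add_one_ne_two_pow (hp_odd.pow (n := t)) hm)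
  · obtain rfl := Nat.eq_one_of_pow_add_one_eq_two_pow hp.one_lt hp_odd hf_odd h
    refine ⟨rfl, (Nat.prime_of_pow_sub_one_prime (a := 2) ?_ ?_).2⟩
    · rintro rfl
      have := hp.two_le
      simp only [pow_one] at h
      omega
    · rwa [← h, pow_one, Nat.add_sub_cancel]

/-- If `p, r` are primes and `f, m ≥ 1` with `p ^ f + 1 = r ^ m`, then either
`(p, f, r, m) = (2, 3, 3, 2)`, or `p = 2`, `m = 1` and `f` is a power of `2`
(so that `r = 2 ^ f + 1` is a Fermat prime), or `r = 2`, `f = 1` and `m` is prime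
(so that `p = 2 ^ m - 1` is a Mersenne prime). -/
theorem stmt_0 (p r f m : ℕ) (hp : p.Prime) (hr : r.Prime) (hf : 1 ≤ f) (hm : 1 ≤ m)
    (h : p ^ f + 1 = r ^ m) :
    (p = 2 ∧ f = 3 ∧ r = 3 ∧ m = 2) ∨
    (p = 2 ∧ m = 1 ∧ ∃ k : ℕ, f = 2 ^ k) ∨
    (r = 2 ∧ f = 1 ∧ m.Prime) := by
  have hparity : Even r ↔ ¬Even p := by
    rw [← Nat.even_pow' (by omega : m ≠ 0), ← h, Nat.even_add_one, Nat.even_pow' (by omega)]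
  rcases hp.eq_two_or_odd' with rfl | hp_odd
  · have hr_odd : Odd r := Nat.not_even_iff_odd.1 (by simp [hparity])
    rcases hr.two_pow_add_one_eq_pow_cases hr_odd (by omega) h with h | h
    · exact Or.inl ⟨rfl, h⟩
    · exact Or.inr (Or.inl ⟨rfl, h⟩)
  · obtain rfl : r = 2 := hr.even_iff.1 (hparity.2 (Nat.not_even_iff_odd.2 hp_odd))
    exact Or.inr (Or.inr
      ⟨rfl, hp.eq_one_and_prime_of_pow_add_one_eq_two_pow hp_odd (by omega) h⟩)
end

section
/- Let f ≥ 1 be an integer and q = 2^f. If ε = 1 and q + 1 has exactly one prime divisor while q − 1 has exactly two distinct prime divisors, then f = 4, i.e., q = 16, q − 1 = 15 = 3·5 and q + 1 = 17. -/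
/-!
A prime power `2 ^ f + 1 = p ^ k` with `f ≠ 3` is a prime. For even `k`, the factorisation
`(p ^ (k / 2) - 1) * (p ^ (k / 2) + 1) = 2 ^ f` into two powers of two differing by `2` forces
`p ^ (k / 2) = 3`, i.e. `f = 3`. For odd `k`, `p ^ k - 1 = (p - 1) * (1 + p + ⋯ + p ^ (k - 1))`
and the geometric sum is odd, hence equals `1`, so `k = 1`.
Since `2 ^ f + 1` is prime, `f = 2 ^ a`; for `a ≥ 3` the number `2 ^ f - 1` is divisible by
`2 ^ 8 - 1 = 3 * 5 * 17`, and the remaining exponents `f ∈ {1, 2, 3, 4}` are checked by hand.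
-/

namespace Nat

lemma eq_one_and_eq_two_of_two_pow_add_two_eq_two_pow {i j : ℕ} (h : 2 ^ i + 2 = 2 ^ j) :
    i = 1 ∧ j = 2 := by
  have := Nat.one_le_two_pow (n := i)
  rcases i with _ | _ | i <;> rcases j with _ | _ | _ | j <;>
    simp only [pow_zero, pow_succ] at h this <;> omega

lemma eq_three_of_sq_eq_two_pow_add_one_s2 {x f : ℕ} (h : x ^ 2 = 2 ^ f + 1) : f = 3 := by
  obtain ⟨y, rfl⟩ : ∃ y, x = y + 1 := ⟨x - 1, by grind⟩
  have hmul : y * (y + 2) = 2 ^ f := by linarith [show (y + 1) ^ 2 = y * (y + 2) + 1 by ring]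
  obtain ⟨i, -, hi⟩ := (dvd_prime_pow prime_two).mp (Dvd.intro _ hmul)
  obtain ⟨j, -, hj⟩ := (dvd_prime_pow prime_two).mp (Dvd.intro_left _ hmul)
  obtain ⟨rfl, rfl⟩ := eq_one_and_eq_two_of_two_pow_add_two_eq_two_pow (hi ▸ hj)
  exact Nat.pow_right_injective le_rfl (by simp_all)

lemma eq_one_of_pow_eq_two_pow_add_one_s2 {p k f : ℕ} (h : p ^ k = 2 ^ f + 1) (hk : Odd k) :
    k = 1 := by
  rcases eq_or_ne f 0 with rfl | hf
  · exact (prime_two.pow_eq_iff.mp h).2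
  have hp : Odd p := by
    rw [← odd_pow_iff hk.pos.ne', h]
    exact (even_pow' hf).mpr even_two |>.add_one
  have hS : (∑ i ∈ Finset.range k, p ^ i) * (p - 1) = 2 ^ f := by
    rw [geom_sum_mul_of_one_le hp.pos, h, Nat.add_sub_cancel]
  have hS_odd : Odd (∑ i ∈ Finset.range k, p ^ i) := by
    rw [Finset.odd_sum_iff_odd_card_odd, Finset.filter_true_of_mem fun i _ ↦ hp.pow,
      Finset.card_range]
    exact hk
  rw [(hS_odd.coprime_two_right.pow_right f).eq_one_of_dvd (Dvd.intro _ hS), one_mul] at hS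
  have hp2 : 2 ≤ p := by have := Nat.one_le_two_pow (n := f); omega
  exact Nat.pow_right_injective hp2 (by simp only [pow_one]; omega)

lemma prime_two_pow_add_one_of_isPrimePow {f : ℕ} (h : IsPrimePow (2 ^ f + 1)) (hf : f ≠ 3) :
    (2 ^ f + 1).Prime := by
  obtain ⟨p, k, hp, -, hpk⟩ := h
  rcases k.even_or_odd with ⟨j, rfl⟩ | hk
  · exact absurd (eq_three_of_sq_eq_two_pow_add_one_s2 (x := p ^ j) (by rw [← hpk]; ring)) hf
  · rw [← hpk, eq_one_of_pow_eq_two_pow_add_one_s2 hpk hk, pow_one]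
    exact hp.nat_prime

lemma three_le_card_primeFactors_two_pow_sub_one {f : ℕ} (h8 : 8 ∣ f) (hf : f ≠ 0) :
    3 ≤ (2 ^ f - 1).primeFactors.card := by
  have h255 : 3 * 5 * 17 ∣ 2 ^ f - 1 := pow_sub_one_dvd_pow_sub_one 2 h8
  have hne : 2 ^ f - 1 ≠ 0 := by have := Nat.one_lt_two_pow hf; omega
  calc 3 = ({3, 5, 17} : Finset ℕ).card := rfl
    _ ≤ _ := Finset.card_le_card fun p hp ↦ by
      simp only [Finset.mem_insert, Finset.mem_singleton] at hp
      rcases hp with rfl | rfl | rfl <;>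
        exact mem_primeFactors.mpr ⟨by norm_num, dvd_trans (by norm_num) h255, hne⟩

end Nat

theorem stmt_2_general (f : ℕ)
    (h1 : (2 ^ f + 1).primeFactors.card = 1)
    (h2 : (2 ^ f - 1).primeFactors.card = 2) :
    f = 4 ∧ 2 ^ f = 16 ∧ 2 ^ f - 1 = 3 * 5 ∧ 2 ^ f + 1 = 17 := by
  have hf0 : f ≠ 0 := by rintro rfl; simp at h2
  have hprime : (2 ^ f + 1).Prime := by
    refine Nat.prime_two_pow_add_one_of_isPrimePow
      (isPrimePow_iff_card_primeFactors_eq_one.mpr h1) ?_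
    rintro rfl
    simp [Nat.Prime.primeFactors (by norm_num : (7 : ℕ).Prime)] at h2
  obtain ⟨a, rfl⟩ := Nat.pow_of_pow_add_prime one_lt_two hf0 hprime
  have ha : a < 3 := by
    by_contra! ha
    have := Nat.three_le_card_primeFactors_two_pow_sub_one (pow_dvd_pow 2 ha) hf0
    omega
  interval_cases a
  · simp at h2
  · simp [Nat.Prime.primeFactors (by norm_num : (3 : ℕ).Prime)] at h2
  · norm_num

/-- If `q = 2 ^ f` with `f ≥ 1`, `q + 1` has exactly one prime divisor and `q - 1` has exactly
two distinct prime divisors, then `f = 4`, `q = 16`, `q - 1 = 15 = 3 * 5` and `q + 1 = 17`. -/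
theorem stmt_2 (f : ℕ) (hf : 1 ≤ f)
    (h1 : (2 ^ f + 1).primeFactors.card = 1)
    (h2 : (2 ^ f - 1).primeFactors.card = 2) :
    f = 4 ∧ 2 ^ f = 16 ∧ 2 ^ f - 1 = 3 * 5 ∧ 2 ^ f + 1 = 17 :=
  stmt_2_general f h1 h2
end

section
/- Let f ≥ 1 be an integer and q = 2^f. If both q − 1 and q + 1 have exactly two distinct prime divisors each, then either f is prime, or f = 6, or f = 9. -/
/-!
Everything rests on lifting the exponent: if `b` is odd, `b ∣ x ^ n - 1` and every prime factor
of `b` divides `x - 1`, then `b ∣ (x - 1) * n`. In particular a power of `3` dividing `4 ^ n - 1`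
is at most `3 n`.

For `f = 2 m`, the coprime factors `2 ^ m - 1` and `2 ^ m + 1` of `2 ^ f - 1` share its two prime
factors, so the one divisible by `3` is a power of `3`; hence `2 ^ m - 1 ≤ 3 m`, i.e. `m ≤ 3`, and
`f = 4` fails because `2 ^ 4 + 1 = 17` is prime. For odd composite `f = d e` with `d ≥ 5` and
`e ≥ 3`, the divisor `2 ^ d + 1` of `2 ^ f + 1` is not a power of `3`, so it already has both prime
factors of `2 ^ f + 1`; lifting the exponent then gives `2 ^ f + 1 ≤ (4 ^ d - 1) e`, which is
false.
-/

theorem Nat.dvd_sub_one_mul_of_dvd_pow_sub_one {x n b : ℕ} (hb : Odd b) (hn : n ≠ 0)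
    (hbx : b ∣ x ^ n - 1) (hprime : b.primeFactors ⊆ (x - 1).primeFactors) :
    b ∣ (x - 1) * n := by
  obtain rfl | hb1 := eq_or_ne b 1
  · exact one_dvd _
  obtain ⟨q, hq⟩ := Nat.nonempty_primeFactors.2 (by have := hb.pos; omega : 1 < b)
  have hx : 1 < x := by
    have := (Nat.mem_primeFactors.1 (hprime hq)).2.2
    omega
  have hxn : x ^ n - 1 ≠ 0 := Nat.sub_ne_zero_of_lt (Nat.one_lt_pow hn hx)
  refine (Nat.factorization_prime_le_iff_dvd hb.pos.ne' (by simp [hn]; omega)).1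
    fun p hp => ?_
  by_cases hpb : p ∣ b
  swap
  · simp [Nat.factorization_eq_zero_of_not_dvd hpb]
  have hpx : p ∣ x - 1 := Nat.dvd_of_mem_primeFactors
    (hprime (Nat.mem_primeFactors_of_ne_zero hb.pos.ne' |>.2 ⟨hp, hpb⟩))
  have hpx' : ¬ p ∣ x := fun h => hp.one_lt.ne'
    (Nat.dvd_one.1 (by simpa [Nat.sub_sub_self hx.le] using Nat.dvd_sub h hpx))
  have := Fact.mk hp
  calc b.factorization p ≤ (x ^ n - 1).factorization p :=
        (Nat.factorization_le_iff_dvd hb.pos.ne' hxn).2 hbx p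
    _ = ((x - 1) * n).factorization p := by
      rw [Nat.factorization_def _ hp, Nat.factorization_def _ hp, padicValNat.mul (by omega) hn]
      simpa using padicValNat.pow_sub_pow (hb.of_dvd_nat hpb) hx hpx hpx' hn

theorem Nat.primeFactors_eq_singleton_of_coprime {a b p : ℕ} (hab : a.Coprime b) (hb : 1 < b)
    (hp : p.Prime) (hpa : p ∣ a) (h : (a * b).primeFactors.card ≤ 2) : a.primeFactors = {p} := by
  have ha : a ≠ 0 := by
    rintro rfl
    exact hb.ne' (Nat.coprime_zero_left b |>.1 hab)
  have hcard : a.primeFactors.card ≤ 1 := by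
    rw [hab.primeFactors_mul, Finset.card_union_of_disjoint hab.disjoint_primeFactors] at h
    have := (Nat.nonempty_primeFactors.2 hb).card_pos
    omega
  have hmem : p ∈ a.primeFactors := Nat.mem_primeFactors_of_ne_zero ha |>.2 ⟨hp, hpa⟩
  exact Finset.eq_singleton_iff_unique_mem.2
    ⟨hmem, fun q hq => Finset.card_le_one.1 hcard _ hq _ hmem⟩

theorem three_mul_add_one_lt_two_pow {n : ℕ} (hn : 4 ≤ n) : 3 * n + 1 < 2 ^ n := by
  induction n, hn using Nat.le_induction with
  | base => norm_num
  | succ n hn ih => rw [pow_succ]; omega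

theorem four_pow_mul_lt_two_pow_mul {d e : ℕ} (hd : 3 ≤ d) (he : 3 ≤ e) :
    4 ^ d * e < 2 ^ (d * e) := by
  obtain ⟨k, rfl⟩ : ∃ k, e = k + 2 := ⟨e - 2, by omega⟩
  have hk : k + 2 < 2 ^ (d * k) := (Nat.lt_two_pow_self).trans_le' (by nlinarith)
  calc 4 ^ d * (k + 2) < 4 ^ d * 2 ^ (d * k) := by gcongr
    _ = 2 ^ (d * (k + 2)) := by
      rw [show (4 : ℕ) = 2 ^ 2 by rfl, ← pow_mul, ← pow_add]; ring_nf

theorem four_pow_sub_one_eq (n : ℕ) : 4 ^ n - 1 = (2 ^ n + 1) * (2 ^ n - 1) := by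
  rw [← Nat.sq_sub_sq, ← pow_mul, mul_comm, pow_mul]
  norm_num

theorem le_three_mul_of_dvd_four_pow_sub_one {b n : ℕ} (hn : n ≠ 0) (hb : b ∣ 4 ^ n - 1)
    (h3 : b.primeFactors = {3}) : b ≤ 3 * n := by
  have hodd : Odd (4 ^ n - 1) := Nat.Even.sub_odd (Nat.one_le_pow _ _ (by norm_num))
    (by simp [Nat.even_pow, hn, show Even 4 by decide]) odd_one
  have hdvd := Nat.dvd_sub_one_mul_of_dvd_pow_sub_one (hodd.of_dvd_nat hb) hn hb
    (by simp [h3, Nat.prime_three.primeFactors])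
  exact Nat.le_of_dvd (by omega) hdvd

theorem le_three_of_card_primeFactors_four_pow_sub_one {m : ℕ}
    (h : (4 ^ m - 1).primeFactors.card = 2) : m ≤ 3 := by
  by_contra! hm
  have hlt : 3 * m + 1 < 2 ^ m := three_mul_add_one_lt_two_pow (by omega)
  have hcop : (2 ^ m - 1).Coprime (2 ^ m + 1) := by
    rw [show 2 ^ m + 1 = 2 + (2 ^ m - 1) by omega, Nat.coprime_add_self_right,
      Nat.coprime_two_right]
    exact Nat.Even.sub_odd Nat.one_le_two_pow (Nat.even_pow.2 ⟨even_two, by omega⟩) odd_one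
  rw [four_pow_sub_one_eq, mul_comm] at h
  have h3 : 3 ∣ (2 ^ m - 1) * (2 ^ m + 1) := by
    rw [mul_comm, ← four_pow_sub_one_eq]
    simpa using Nat.sub_dvd_pow_sub_pow 4 1 m
  obtain ⟨b, hb, hpf, hbm⟩ : ∃ b, b ∣ 4 ^ m - 1 ∧ b.primeFactors = {3} ∧ 2 ^ m - 1 ≤ b := by
    rcases Nat.prime_three.dvd_mul.1 h3 with h3 | h3
    · exact ⟨2 ^ m - 1, Dvd.intro_left _ (four_pow_sub_one_eq m).symm,
        Nat.primeFactors_eq_singleton_of_coprime hcop (by omega) Nat.prime_three h3 h.le,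
        le_rfl⟩
    · exact ⟨2 ^ m + 1, Dvd.intro _ (four_pow_sub_one_eq m).symm,
        Nat.primeFactors_eq_singleton_of_coprime hcop.symm (by omega) Nat.prime_three h3
          (by rw [mul_comm, h]), by omega⟩
  have := le_three_mul_of_dvd_four_pow_sub_one (by omega) hb hpf
  omega

theorem two_le_card_primeFactors_two_pow_add_one {d : ℕ} (hd : Odd d) (hd4 : 4 ≤ d) :
    2 ≤ (2 ^ d + 1).primeFactors.card := by
  by_contra! hcard
  have h3 : 3 ∈ (2 ^ d + 1).primeFactors :=
    Nat.mem_primeFactors_of_ne_zero (by positivity) |>.2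
      ⟨Nat.prime_three, by simpa using hd.nat_add_dvd_pow_add_pow 2 1⟩
  have hpf : (2 ^ d + 1).primeFactors = {3} :=
    Finset.eq_singleton_iff_unique_mem.2
      ⟨h3, fun q hq => Finset.card_le_one.1 (by omega) _ hq _ h3⟩
  have := le_three_mul_of_dvd_four_pow_sub_one (by omega)
    (Dvd.intro _ (four_pow_sub_one_eq d).symm) hpf
  have := three_mul_add_one_lt_two_pow hd4
  omega

theorem card_primeFactors_two_pow_mul_add_one_ne_two {d e : ℕ} (hd : Odd d) (hd5 : 5 ≤ d)
    (he : Odd e) (he3 : 3 ≤ e) : (2 ^ (d * e) + 1).primeFactors.card ≠ 2 := by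
  intro h
  have hdvd : 2 ^ d + 1 ∣ 2 ^ (d * e) + 1 := by
    simpa [pow_mul] using he.nat_add_dvd_pow_add_pow (2 ^ d) 1
  have h4d : 1 < 4 ^ d := Nat.one_lt_pow (by omega) (by norm_num)
  -- `2 ^ d + 1` already has two prime factors, so it has all those of `2 ^ (d * e) + 1`
  have hpf : (2 ^ (d * e) + 1).primeFactors ⊆ (4 ^ d - 1).primeFactors := by
    rw [← Finset.eq_of_subset_of_card_le (Nat.primeFactors_mono hdvd (by positivity))
      (by rw [h]; exact two_le_card_primeFactors_two_pow_add_one hd (by omega))]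
    exact Nat.primeFactors_mono (Dvd.intro _ (four_pow_sub_one_eq d).symm) (by omega)
  have hodd : Odd (2 ^ (d * e) + 1) := (Nat.even_pow.2 ⟨even_two, by positivity⟩).add_one
  have hdvd' : 2 ^ (d * e) + 1 ∣ (4 ^ d) ^ e - 1 := by
    rw [← pow_mul]
    exact Dvd.intro _ (four_pow_sub_one_eq _).symm
  have hle := Nat.le_of_dvd (Nat.mul_pos (by omega) (by omega))
    (Nat.dvd_sub_one_mul_of_dvd_pow_sub_one hodd (by omega) hdvd' hpf)
  have := four_pow_mul_lt_two_pow_mul (by omega : 3 ≤ d) he3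
  have : (4 ^ d - 1) * e ≤ 4 ^ d * e := Nat.mul_le_mul_right _ (Nat.sub_le _ _)
  omega

theorem exists_mul_eq_of_odd_of_not_prime {f : ℕ} (hf : Odd f) (h1 : f ≠ 1) (hp : ¬ f.Prime)
    (h9 : f ≠ 9) : ∃ d e, 5 ≤ d ∧ 3 ≤ e ∧ f = d * e := by
  set e := f.minFac
  have he : e.Prime := Nat.minFac_prime h1
  have he2 : e ≠ 2 := fun h =>
    Nat.not_even_iff_odd.2 hf (even_iff_two_dvd.2 (h ▸ Nat.minFac_dvd f))
  obtain ⟨d, hd⟩ : e ∣ f := Nat.minFac_dvd f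
  have hed : e ≤ d := by
    have hsq : e ^ 2 ≤ f := Nat.minFac_sq_le_self hf.pos hp
    rw [sq, hd] at hsq
    exact Nat.le_of_mul_le_mul_left hsq he.pos
  have := he.two_le
  refine ⟨d, e, ?_, by omega, by rw [hd, mul_comm]⟩
  obtain ⟨k, rfl⟩ := (Nat.odd_mul.1 (hd ▸ hf)).2
  rcases k with _ | _ | k
  · omega
  · exact absurd (by rw [hd, show e = 3 by omega]; rfl) h9
  · omega

theorem stmt_4_general (f : ℕ)
    (h1 : (2 ^ f - 1).primeFactors.card = 2)
    (h2 : (2 ^ f + 1).primeFactors.card = 2) :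
    f.Prime ∨ f = 6 ∨ f = 9 := by
  rcases Nat.even_or_odd' f with ⟨m, rfl | rfl⟩
  · have hm : m ≤ 3 := le_three_of_card_primeFactors_four_pow_sub_one (by rwa [pow_mul] at h1)
    interval_cases m
    · simp at h1
    · norm_num
    · norm_num [Nat.Prime.primeFactors (by norm_num : Nat.Prime 17)] at h2
    · norm_num
  · by_contra! hf
    have hodd := odd_two_mul_add_one m
    have hne : 2 * m + 1 ≠ 1 := by rintro h; simp [h] at h1
    obtain ⟨d, e, hd, he, hde⟩ := exists_mul_eq_of_odd_of_not_prime hodd hne hf.1 hf.2.2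
    obtain ⟨hdo, heo⟩ := Nat.odd_mul.1 (hde ▸ hodd)
    exact card_primeFactors_two_pow_mul_add_one_ne_two hdo hd heo he (hde ▸ h2)

/-- If `q = 2 ^ f` with `f ≥ 1` and both `q - 1` and `q + 1` have exactly two distinct prime
divisors, then `f` is prime, or `f = 6`, or `f = 9`. -/
theorem stmt_4 (f : ℕ) (hf : 1 ≤ f)
    (h1 : (2 ^ f - 1).primeFactors.card = 2)
    (h2 : (2 ^ f + 1).primeFactors.card = 2) :
    f.Prime ∨ f = 6 ∨ f = 9 :=
  stmt_4_general f h1 h2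
end

section
/- For f ≥ 3 and J = {0, 1}, let V₀ be the natural 2-dimensional module of SL₂(2^f) over GF(2^f) and V₁ its Frobenius twist; then there exists a vector in V₀ ⊗ V₁ whose stabilizer in SL₂(2^f) is trivial. -/
open scoped TensorProduct

/-- The `i`-th Galois twist of the natural 2-dimensional module of `SL₂(F)` over a field `F`
of characteristic `2`: `g` acts as the matrix obtained by applying `a ↦ a ^ (2 ^ i)`
entrywise. -/
noncomputable def twistRep (F : Type) [Field F] [CharP F 2] (i : ℕ) :
    Representation F (Matrix.SpecialLinearGroup (Fin 2) F) (Fin 2 → F) where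
  toFun g := Matrix.mulVecLin ((g : Matrix (Fin 2) (Fin 2) F).map (iterateFrobenius F 2 i))
  map_one' := by
    simp [Matrix.SpecialLinearGroup.coe_one, Matrix.map_one, Module.End.one_eq_id]
  map_mul' g h := by
    simp [Matrix.map_mul, Matrix.mulVecLin_mul, Module.End.mul_eq_comp]

/-- For `f ≥ 3`, the tensor product `V₀ ⊗ V₁` of the natural module of `SL₂(2^f)` over
`GF(2^f)` with its Frobenius twist contains a vector whose stabilizer in `SL₂(2^f)` is
trivial. -/
theorem stmt_11 (f : ℕ) (hf : 3 ≤ f) :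
    ∃ v : (Fin 2 → GaloisField 2 f) ⊗[GaloisField 2 f] (Fin 2 → GaloisField 2 f),
      ∀ g : Matrix.SpecialLinearGroup (Fin 2) (GaloisField 2 f),
        TensorProduct.map (twistRep (GaloisField 2 f) 0 g) (twistRep (GaloisField 2 f) 1 g)
          v = v → g = 1 := by

  classical
  set F := GaloisField 2 f with hF
  refine ⟨(![0, 1] : Fin 2 → F) ⊗ₜ[F] (![1, 0] : Fin 2 → F), fun g hg => ?_⟩
  set a := (g : Matrix (Fin 2) (Fin 2) F) 0 0 with ha
  set b := (g : Matrix (Fin 2) (Fin 2) F) 0 1 with hb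
  set c := (g : Matrix (Fin 2) (Fin 2) F) 1 0 with hc
  set d := (g : Matrix (Fin 2) (Fin 2) F) 1 1 with hd
  have hdet : a * d - b * c = 1 := by
    have := g.2
    rw [Matrix.det_fin_two] at this
    exact this
  rw [TensorProduct.map_tmul] at hg
  have key : ∀ i j : Fin 2,
      (twistRep F 1 g ![1, 0]) j * (twistRep F 0 g ![0, 1]) i
        = (![1, 0] : Fin 2 → F) j * (![0, 1] : Fin 2 → F) i := by
    intro i j
    have := congrArg (fun w => ((Pi.basisFun F (Fin 2)).tensorProduct
      (Pi.basisFun F (Fin 2))).repr w (i, j)) hg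
    erw [Module.Basis.tensorProduct_repr_tmul_apply] at this
    simpa using this
  have e00 := key 0 0
  have e10 := key 1 0
  have e01 := key 0 1
  have e11 := key 1 1
  simp only [twistRep, MonoidHom.coe_mk, OneHom.coe_mk, Matrix.mulVecLin_apply,
    Matrix.mulVec, dotProduct, Fin.sum_univ_two, Matrix.map_apply,
    iterateFrobenius_def, pow_zero, pow_one, pow_succ,
    Matrix.cons_val_zero, Matrix.cons_val_one, Matrix.head_cons,
    mul_zero, mul_one, zero_mul, one_mul, zero_add, add_zero] at e00 e10 e01 e11
  rw [← ha, ← hb] at e00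
  rw [← ha, ← hd] at e10
  rw [← hc, ← hb] at e01
  rw [← hc, ← hd] at e11
  -- determine the entries
  have ha0 : a ≠ 0 := by
    rintro h
    rw [h] at e10
    simp at e10
  have hd0 : d ≠ 0 := by
    rintro h
    rw [h] at e10
    simp at e10
  have hc0 : c = 0 := by
    rcases mul_eq_zero.mp e11 with h | h
    · exact mul_self_eq_zero.mp h
    · exact absurd h hd0
  have hb0 : b = 0 := by
    rcases mul_eq_zero.mp e00 with h | h
    · exact absurd (mul_self_eq_zero.mp h) ha0
    · exact h
  have had : a * d = 1 := by
    rw [hb0, hc0] at hdet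
    linear_combination hdet
  have ha1 : a = 1 := by
    have h2 : a * (a * d) = 1 := by rw [← mul_assoc]; exact e10
    rw [had, mul_one] at h2
    exact h2
  have hd1 : d = 1 := by
    rw [ha1, one_mul] at had
    exact had
  ext i j
  fin_cases i <;> fin_cases j <;>
    simp only [Matrix.SpecialLinearGroup.coe_one, Matrix.one_apply] <;>
    simp_all
end
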